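/- On the Hilbert space L²(ℝ^{2m} × ℝ), the formula (U(g(u,c,a,b))f)(x,λ) = exp(i·e^{2λ}·u·(e^{−λ} b·x + c)) · f(x + e^λ a, λ + ln u) defines a unitary representation of the semidirect product group ℝ_+ ⋉ H_{2m} (with matrix form g(u,c,a,b) = [[u,a,c],[0,𝟙,b],[0,0,u^{-1}]]): each U(g) is unitary and U(g)U(g') = U(gg'). -/

import Mathlib

open Complex MeasureTheory

noncomputable section

/-- Euclidean dot product. -/
def dotp {d : ℕ} (a x : Fin d → ℝ) : ℝ := ∑ i, a i * x i

/-- The induced representation of `ℝ₊ ⋉ H_{2m}` on functions on `ℝ^{2m} × ℝ`: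
`(U(g(u,c,a,b))f)(x,λ) = exp(i e^{2λ} u (e^{−λ} b·x + c)) f(x + e^λ a, λ + ln u)`. -/
def Urep (d : ℕ) (u c : ℝ) (a b : Fin d → ℝ) (f : (Fin d → ℝ) × ℝ → ℂ) :
    (Fin d → ℝ) × ℝ → ℂ :=
  fun p => Complex.exp (I * ((Real.exp (2 * p.2) * u * (Real.exp (-p.2) * dotp b p.1 + c) : ℝ) : ℂ)) *
    f (p.1 + Real.exp p.2 • a, p.2 + Real.log u)

/-!
The phase factor has modulus one, and `(x, λ) ↦ (x + e^λ a, λ + log u)` is a skew product of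
translations (translate `λ`, then translate `x` by an amount depending only on `λ`), so it preserves
the flat Lebesgue measure on `ℝ^d × ℝ`; hence every `U(g)` is an `L²` isometry. Multiplicativity
reduces to the composition law of these maps together with a cocycle identity for the phases.
-/

lemma dotp_eq_dotProduct {d : ℕ} (a x : Fin d → ℝ) : dotp a x = a ⬝ᵥ x := rfl

section SkewTranslation

variable {G H E : Type*} [AddGroup G] [MeasurableSpace G] [MeasurableAdd₂ G]
  [AddGroup H] [MeasurableSpace H] [MeasurableAdd H]
  [NormedAddCommGroup E] [NormedSpace ℝ E]
  (μ : Measure G) (ν : Measure H) [μ.IsAddRightInvariant] [ν.IsAddRightInvariant]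
  [SFinite μ] [SFinite ν] {φ : H → G}

theorem measurePreserving_add_skew (hφ : Measurable φ) (s : H) :
    MeasurePreserving (fun p : G × H => (p.1 + φ p.2, p.2 + s)) (μ.prod ν) (μ.prod ν) := by
  have hskew : MeasurePreserving (fun q : H × G => (q.1 + s, q.2 + φ q.1)) (ν.prod μ) (ν.prod μ) :=
    (measurePreserving_add_right ν s).skew_product (by fun_prop)
      (Filter.Eventually.of_forall fun t => map_add_right_eq_self μ (φ t))
  exact (Measure.measurePreserving_swap.comp hskew).comp Measure.measurePreserving_swap

theorem integral_comp_add_skew [MeasurableNeg G] [MeasurableNeg H] (hφ : Measurable φ) (s : H)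
    (g : G × H → E) :
    ∫ p, g (p.1 + φ p.2, p.2 + s) ∂μ.prod ν = ∫ p, g p ∂μ.prod ν := by
  let e : G × H ≃ᵐ G × H :=
    { toFun p := (p.1 + φ p.2, p.2 + s)
      invFun p := (p.1 - φ (p.2 - s), p.2 - s)
      left_inv p := by simp
      right_inv p := by simp
      measurable_toFun := (by fun_prop : Measurable fun p : G × H => (p.1 + φ p.2, p.2 + s))
      measurable_invFun :=
        (by fun_prop : Measurable fun p : G × H => (p.1 - φ (p.2 - s), p.2 - s)) }
  exact (measurePreserving_add_skew μ ν hφ s).integral_comp' (f := e) g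

end SkewTranslation

namespace Urep

variable {d : ℕ}

def shift (a : Fin d → ℝ) (u : ℝ) (p : (Fin d → ℝ) × ℝ) : (Fin d → ℝ) × ℝ :=
  (p.1 + Real.exp p.2 • a, p.2 + Real.log u)

def phase (u c : ℝ) (b : Fin d → ℝ) (p : (Fin d → ℝ) × ℝ) : ℝ :=
  Real.exp (2 * p.2) * u * (Real.exp (-p.2) * dotp b p.1 + c)

lemma apply (u c : ℝ) (a b : Fin d → ℝ) (f : (Fin d → ℝ) × ℝ → ℂ) (p : (Fin d → ℝ) × ℝ) :
    Urep d u c a b f p = Complex.exp (I * phase u c b p) * f (shift a u p) := rfl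

lemma norm_apply (u c : ℝ) (a b : Fin d → ℝ) (f : (Fin d → ℝ) × ℝ → ℂ) (p : (Fin d → ℝ) × ℝ) :
    ‖Urep d u c a b f p‖ = ‖f (shift a u p)‖ := by
  rw [apply, norm_mul, mul_comm I, Complex.norm_exp_ofReal_mul_I, one_mul]

theorem integral_norm_sq (u c : ℝ) (a b : Fin d → ℝ) (f : (Fin d → ℝ) × ℝ → ℂ) :
    ∫ p, ‖Urep d u c a b f p‖ ^ 2 = ∫ p, ‖f p‖ ^ 2 := by
  simp only [norm_apply, shift]
  exact integral_comp_add_skew volume volume (φ := fun t => Real.exp t • a) (by fun_prop)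
    (Real.log u) (fun p => ‖f p‖ ^ 2)

lemma shift_shift {u u' : ℝ} (hu : 0 < u) (hu' : u' ≠ 0) (a a' : Fin d → ℝ)
    (p : (Fin d → ℝ) × ℝ) : shift a' u' (shift a u p) = shift (u • a' + a) (u * u') p := by
  simp only [shift, Real.exp_add, Real.exp_log hu, Real.log_mul hu.ne' hu', smul_add, mul_smul,
    Prod.mk.injEq]
  exact ⟨by abel, by ring⟩

/-- The cocycle identity of the phases over `shift`: the source of the group law of `g g'`. -/
lemma phase_add_phase_shift {u u' : ℝ} (hu : 0 < u) (hu' : u' ≠ 0) (c c' : ℝ)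
    (a b b' : Fin d → ℝ) (p : (Fin d → ℝ) × ℝ) :
    phase u c b p + phase u' c' b' (shift a u p)
      = phase (u * u') (u * c' + dotp a b' + c / u') (b' + u'⁻¹ • b) p := by
  obtain ⟨x, l⟩ := p
  have exp_two_mul (t : ℝ) : Real.exp (2 * t) = Real.exp t ^ 2 := by
    exact_mod_cast Real.exp_nat_mul t 2
  simp only [phase, shift, exp_two_mul, dotp_eq_dotProduct, dotProduct_add, add_dotProduct,
    dotProduct_smul, smul_dotProduct, dotProduct_comm a b', smul_eq_mul, neg_add, Real.exp_add,
    Real.exp_neg, Real.exp_log hu]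
  field_simp
  ring

theorem comp {u u' : ℝ} (hu : 0 < u) (hu' : u' ≠ 0) (c c' : ℝ) (a b a' b' : Fin d → ℝ)
    (f : (Fin d → ℝ) × ℝ → ℂ) :
    Urep d u c a b (Urep d u' c' a' b' f)
      = Urep d (u * u') (u * c' + dotp a b' + c / u') (u • a' + a) (b' + u'⁻¹ • b) f := by
  funext p
  rw [apply, apply, apply, ← mul_assoc, ← Complex.exp_add, ← mul_add, ← ofReal_add,
    phase_add_phase_shift hu hu', shift_shift hu hu']

end Urep

theorem stmt18_general (m : ℕ) :
    (∀ (u c : ℝ) (a b : Fin (2 * m) → ℝ) (f : (Fin (2 * m) → ℝ) × ℝ → ℂ), 0 < u →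
      (∫ p : (Fin (2 * m) → ℝ) × ℝ, ‖Urep (2 * m) u c a b f p‖ ^ 2)
        = ∫ p : (Fin (2 * m) → ℝ) × ℝ, ‖f p‖ ^ 2) ∧
    (∀ (u u' c c' : ℝ) (a b a' b' : Fin (2 * m) → ℝ) (f : (Fin (2 * m) → ℝ) × ℝ → ℂ),
      0 < u → 0 < u' →
      Urep (2 * m) u c a b (Urep (2 * m) u' c' a' b' f)
        = Urep (2 * m) (u * u') (u * c' + dotp a b' + c / u') (u • a' + a)
            (b' + u'⁻¹ • b) f) :=
  ⟨fun u c a b f _ => Urep.integral_norm_sq u c a b f,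
    fun _ _ c c' a b a' b' f hu hu' => Urep.comp hu hu'.ne' c c' a b a' b' f⟩

/-- `U` is a unitary representation of the semidirect product `ℝ₊ ⋉ H_{2m}` on
`L²(ℝ^{2m} × ℝ)`: each `U(g)` preserves the `L²` norm, and `U(g)U(g') = U(gg')` with the
group law `gg' = g(uu', uc' + a·b' + c/u', ua' + a, b' + b/u')`. -/
theorem stmt18 (m : ℕ) (hm : 1 ≤ m) :
    (∀ (u c : ℝ) (a b : Fin (2 * m) → ℝ) (f : (Fin (2 * m) → ℝ) × ℝ → ℂ), 0 < u →
      (∫ p : (Fin (2 * m) → ℝ) × ℝ, ‖Urep (2 * m) u c a b f p‖ ^ 2)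
        = ∫ p : (Fin (2 * m) → ℝ) × ℝ, ‖f p‖ ^ 2) ∧
    (∀ (u u' c c' : ℝ) (a b a' b' : Fin (2 * m) → ℝ) (f : (Fin (2 * m) → ℝ) × ℝ → ℂ),
      0 < u → 0 < u' →
      Urep (2 * m) u c a b (Urep (2 * m) u' c' a' b' f)
        = Urep (2 * m) (u * u') (u * c' + dotp a b' + c / u') (u • a' + a)
            (b' + u'⁻¹ • b) f) :=
  stmt18_general m

end
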